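/- arXiv:0905.0350 — 2 statements merged into one kernel-verified Lean document; each statement's English description precedes it below -/
import Mathlib

section
/- Let A = ω_0^{a_1-1} ω_1 ω_0^{a_2-1} ω_1 ⋯ ω_0^{a_r-1} ω_1 and B = ω_0^{b_1-1} ω_1 ω_0^{b_2-1} ω_1 ⋯ ω_0^{b_s-1} ω_1 be words over {ω_0, ω_1}. Then A ⧢ B = Σ_{i=1}^{a_1} C(i+b_1-2, b_1-1) ω_0^{i+b_1-2} ω_1 (A_i' ⧢ B_2) + Σ_{i=1}^{b_1} C(i+a_1-2, a_1-1) ω_0^{i+a_1-2} ω_1 (A_2 ⧢ B_i'), where A_i' = ω_0^{a_1-i} ω_1 ω_0^{a_2-1} ω_1 ⋯ ω_0^{a_r-1} ω_1, B_i' = ω_0^{b_1-i} ω_1 ω_0^{b_2-1} ω_1 ⋯ ω_0^{b_s-1} ω_1, A_2 = ω_0^{a_2-1} ω_1 ⋯ ω_0^{a_r-1} ω_1, and B_2 = ω_0^{b_2-1} ω_1 ⋯ ω_0^{b_s-1} ω_1. -/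
/-- The shuffle product of two words, as a multiset of words (counting multiplicities). -/
def shuffle {α : Type*} : List α → List α → Multiset (List α)
  | [], ys => {ys}
  | xs, [] => {xs}
  | x :: xs, y :: ys =>
      ((shuffle xs (y :: ys)).map (x :: ·)) + ((shuffle (x :: xs) ys).map (y :: ·))
termination_by xs ys => xs.length + ys.length

/-- The word `ω₀^{a₁-1} ω₁ ⋯ ω₀^{a_r-1} ω₁` over `{ω₀, ω₁} = {false, true}`
associated to a multi-index. -/
def wordOf (a : List ℕ) : List Bool :=
  a.foldr (fun c w => List.replicate (c - 1) false ++ [true] ++ w) []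

private def blk (k : ℕ) (u : List Bool) : List Bool := List.replicate k false ++ true :: u

private lemma blk_succ (k : ℕ) (u : List Bool) : blk (k+1) u = false :: blk k u := by
  simp [blk, List.replicate_succ]

private lemma shuffle_cons_cons {α : Type*} (x y : α) (xs ys : List α) :
    shuffle (x :: xs) (y :: ys) =
      ((shuffle xs (y :: ys)).map (x :: ·)) + ((shuffle (x :: xs) ys).map (y :: ·)) := by
  rw [shuffle]

private lemma shuffle_nil_left {α : Type*} (ys : List α) : shuffle [] ys = {ys} := by
  rw [shuffle]

private lemma shuffle_cons_nil {α : Type*} (x : α) (xs : List α) :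
    shuffle (x :: xs) [] = {x :: xs} := by
  rw [shuffle]
  simp

private lemma shuffle_comm {α : Type*} : ∀ xs ys : List α, shuffle xs ys = shuffle ys xs := by
  intro xs
  induction xs with
  | nil =>
    intro ys
    cases ys with
    | nil => rfl
    | cons y ys => rw [shuffle_nil_left, shuffle_cons_nil]
  | cons x xs ihx =>
    intro ys
    induction ys with
    | nil => rw [shuffle_nil_left, shuffle_cons_nil]
    | cons y ys ihy =>
      rw [shuffle_cons_cons, shuffle_cons_cons, ihx (y :: ys), ihy, add_comm]

private lemma map_cons_sum (c : Bool) (s : Finset ℕ) (g : ℕ → Multiset (List Bool)) :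
    Multiset.map (c :: ·) (∑ i ∈ s, g i) = ∑ i ∈ s, Multiset.map (c :: ·) (g i) :=
  map_sum (Multiset.mapAddMonoidHom (c :: ·)) g s

private lemma comp_blk (k : ℕ) : (fun w => false :: w) ∘ blk k = blk (k+1) :=
  funext fun u => (blk_succ k u).symm

private lemma cons_true_eq_blk : (fun w : List Bool => true :: w) = blk 0 := rfl

private lemma keyL : ∀ (n : ℕ) (u v : List Bool),
    shuffle (blk 0 u) (blk n v) =
      (∑ i ∈ Finset.range (0+1),
        ((i + n).choose n) • ((shuffle (blk (0 - i) u) v).map (blk (i + n))))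
      + ∑ j ∈ Finset.range (n+1),
        ((j + 0).choose 0) • ((shuffle u (blk (n - j) v)).map (blk (j + 0))) := by
  intro n
  induction n with
  | zero =>
    intro u v
    have e1 : shuffle (blk 0 u) (blk 0 v)
        = Multiset.map (true :: ·) (shuffle u (blk 0 v))
          + Multiset.map (true :: ·) (shuffle (blk 0 u) v) :=
      shuffle_cons_cons true true u v
    rw [e1]
    simp [cons_true_eq_blk, add_comm]
  | succ n ih =>
    intro u v
    have e1 : shuffle (blk 0 u) (blk (n+1) v)
        = Multiset.map (true :: ·) (shuffle u (blk (n+1) v))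
          + Multiset.map (false :: ·) (shuffle (blk 0 u) (blk n v)) := by
      rw [blk_succ n v]
      exact shuffle_cons_cons true false u (blk n v)
    rw [e1, ih u v, Multiset.map_add, map_cons_sum, map_cons_sum]
    simp only [Multiset.map_nsmul, Multiset.map_map, comp_blk, cons_true_eq_blk]
    rw [Finset.sum_range_one, Finset.sum_range_one]
    conv_rhs => rw [Finset.sum_range_succ' _ (n+1)]
    simp only [Nat.succ_sub_succ, Nat.choose_zero_right, one_smul, zero_add, add_zero,
      Nat.sub_zero, Nat.sub_self, Nat.choose_self]
    abel

private lemma key : ∀ (N m n : ℕ) (u v : List Bool), m + n ≤ N →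
    shuffle (blk m u) (blk n v) =
      (∑ i ∈ Finset.range (m+1),
        ((i + n).choose n) • ((shuffle (blk (m - i) u) v).map (blk (i + n))))
      + ∑ j ∈ Finset.range (n+1),
        ((j + m).choose m) • ((shuffle u (blk (n - j) v)).map (blk (j + m))) := by
  intro N
  induction N with
  | zero =>
    intro m n u v h
    obtain ⟨rfl, rfl⟩ : m = 0 ∧ n = 0 := by omega
    exact keyL 0 u v
  | succ N ih =>
    intro m n u v h
    match m, n with
    | 0, n => exact keyL n u v
    | m+1, 0 =>
      rw [shuffle_comm, keyL (m+1) v u]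
      rw [Finset.sum_congr rfl (fun i (_ : i ∈ Finset.range (0+1)) =>
            congrArg (((i + (m+1)).choose (m+1)) • Multiset.map (blk (i + (m+1))) ·)
              (shuffle_comm (blk (0 - i) v) u)),
          Finset.sum_congr rfl (fun j (_ : j ∈ Finset.range (m+1+1)) =>
            congrArg (((j + 0).choose 0) • Multiset.map (blk (j + 0)) ·)
              (shuffle_comm v (blk (m+1-j) u))),
          add_comm]
    | m+1, n+1 =>
      have e1 : shuffle (blk (m+1) u) (blk (n+1) v)
          = Multiset.map (false :: ·) (shuffle (blk m u) (blk (n+1) v))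
            + Multiset.map (false :: ·) (shuffle (blk (m+1) u) (blk n v)) := by
        rw [blk_succ m u, blk_succ n v]
        exact shuffle_cons_cons false false (blk m u) (blk n v)
      rw [e1, ih m (n+1) u v (by omega), ih (m+1) n u v (by omega)]
      simp only [Multiset.map_add, map_cons_sum, Multiset.map_nsmul, Multiset.map_map, comp_blk]
      have hA : ∑ i ∈ Finset.range (m+1+1),
            ((i + (n+1)).choose (n+1)) • ((shuffle (blk (m+1-i) u) v).map (blk (i + (n+1))))
          = (∑ i ∈ Finset.range (m+1),
              ((i + (n+1)).choose (n+1)) • ((shuffle (blk (m-i) u) v).map (blk (i + (n+1) + 1))))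
            + ∑ i ∈ Finset.range (m+1+1),
              ((i + n).choose n) • ((shuffle (blk (m+1-i) u) v).map (blk (i + n + 1))) := by
        rw [Finset.sum_range_succ'
              (fun i => ((i + (n+1)).choose (n+1)) • ((shuffle (blk (m+1-i) u) v).map (blk (i + (n+1))))) (m+1),
            Finset.sum_range_succ'
              (fun i => ((i + n).choose n) • ((shuffle (blk (m+1-i) u) v).map (blk (i + n + 1)))) (m+1)]
        have hterm : ∀ i ∈ Finset.range (m+1),
            ((i+1 + (n+1)).choose (n+1)) • ((shuffle (blk (m+1-(i+1)) u) v).map (blk (i+1 + (n+1))))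
            = ((i + (n+1)).choose (n+1)) • ((shuffle (blk (m-i) u) v).map (blk (i + (n+1) + 1)))
              + ((i+1 + n).choose n) • ((shuffle (blk (m+1-(i+1)) u) v).map (blk (i+1 + n + 1))) := by
          intro i _
          have pas : (i+1 + (n+1)).choose (n+1) = (i + (n+1)).choose (n+1) + (i+1 + n).choose n := by
            rw [show i+1+(n+1) = (i+n+1)+1 by omega, Nat.choose_succ_succ (i+n+1) n,
              show i+(n+1) = i+n+1 by omega, show i+1+n = i+n+1 by omega]
            exact Nat.add_comm _ _
          rw [show m+1-(i+1) = m-i by omega, pas, add_smul]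
          congr 2 <;> ring_nf
        rw [Finset.sum_congr rfl hterm, Finset.sum_add_distrib]
        have h0 : ((0 + (n+1)).choose (n+1)) • ((shuffle (blk (m+1-0) u) v).map (blk (0 + (n+1))))
            = ((0 + n).choose n) • ((shuffle (blk (m+1-0) u) v).map (blk (0 + n + 1))) := by
          simp [Nat.choose_self]
        rw [h0, add_assoc]
      have hB : ∑ j ∈ Finset.range (n+1+1),
            ((j + (m+1)).choose (m+1)) • ((shuffle u (blk (n+1-j) v)).map (blk (j + (m+1))))
          = (∑ j ∈ Finset.range (n+1+1),
              ((j + m).choose m) • ((shuffle u (blk (n+1-j) v)).map (blk (j + m + 1))))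
            + ∑ j ∈ Finset.range (n+1),
              ((j + (m+1)).choose (m+1)) • ((shuffle u (blk (n-j) v)).map (blk (j + (m+1) + 1))) := by
        rw [Finset.sum_range_succ'
              (fun j => ((j + (m+1)).choose (m+1)) • ((shuffle u (blk (n+1-j) v)).map (blk (j + (m+1))))) (n+1),
            Finset.sum_range_succ'
              (fun j => ((j + m).choose m) • ((shuffle u (blk (n+1-j) v)).map (blk (j + m + 1)))) (n+1)]
        have hterm : ∀ j ∈ Finset.range (n+1),
            ((j+1 + (m+1)).choose (m+1)) • ((shuffle u (blk (n+1-(j+1)) v)).map (blk (j+1 + (m+1))))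
            = ((j+1 + m).choose m) • ((shuffle u (blk (n+1-(j+1)) v)).map (blk (j+1 + m + 1)))
              + ((j + (m+1)).choose (m+1)) • ((shuffle u (blk (n-j) v)).map (blk (j + (m+1) + 1))) := by
          intro j _
          have pas : (j+1 + (m+1)).choose (m+1) = (j+1 + m).choose m + (j + (m+1)).choose (m+1) := by
            rw [show j+1+(m+1) = (j+m+1)+1 by omega, Nat.choose_succ_succ (j+m+1) m,
              show j+(m+1) = j+m+1 by omega, show j+1+m = j+m+1 by omega]
          rw [show n+1-(j+1) = n-j by omega, pas, add_smul]
          congr 2 <;> ring_nf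
        rw [Finset.sum_congr rfl hterm, Finset.sum_add_distrib]
        have h0 : ((0 + (m+1)).choose (m+1)) • ((shuffle u (blk (n+1-0) v)).map (blk (0 + (m+1))))
            = ((0 + m).choose m) • ((shuffle u (blk (n+1-0) v)).map (blk (0 + m + 1))) := by
          simp [Nat.choose_self]
        rw [h0]
        abel
      rw [hA, hB]
      abel

private lemma wordOf_cons_blk (c : ℕ) (cs : List ℕ) :
    wordOf ((c+1) :: cs) = blk c (wordOf cs) := by
  show (List.replicate (c+1-1) false ++ [true]) ++ wordOf cs = _
  simp [blk]

private lemma app_blk (k : ℕ) (u : List Bool) :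
    List.replicate k false ++ [true] ++ u = blk k u := by
  simp [blk]

private lemma fun_blk (k : ℕ) :
    (fun w => List.replicate k false ++ [true] ++ w) = blk k :=
  funext fun w => app_blk k w

/-- Lemma 1: the recursive shuffle decomposition of `A ⧢ B`. -/
theorem shuffle_lemma (a₁ b₁ : ℕ) (as bs : List ℕ)
    (ha : ∀ x ∈ a₁ :: as, 1 ≤ x) (hb : ∀ x ∈ b₁ :: bs, 1 ≤ x) :
    shuffle (wordOf (a₁ :: as)) (wordOf (b₁ :: bs)) =
      (∑ i ∈ Finset.Icc 1 a₁, Nat.choose (i + b₁ - 2) (b₁ - 1) •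
          ((shuffle (List.replicate (a₁ - i) false ++ [true] ++ wordOf as) (wordOf bs)).map
            (fun w => List.replicate (i + b₁ - 2) false ++ [true] ++ w)))
      + ∑ i ∈ Finset.Icc 1 b₁, Nat.choose (i + a₁ - 2) (a₁ - 1) •
          ((shuffle (wordOf as) (List.replicate (b₁ - i) false ++ [true] ++ wordOf bs)).map
            (fun w => List.replicate (i + a₁ - 2) false ++ [true] ++ w)) := by
  obtain ⟨a, rfl⟩ : ∃ a, a₁ = a + 1 := ⟨a₁ - 1, by have := ha a₁ (by simp); omega⟩
  obtain ⟨b, rfl⟩ : ∃ b, b₁ = b + 1 := ⟨b₁ - 1, by have := hb b₁ (by simp); omega⟩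
  rw [wordOf_cons_blk, wordOf_cons_blk, key (a+b) a b _ _ le_rfl]
  congr 1
  · rw [← Finset.Ico_add_one_right_eq_Icc, Finset.sum_Ico_eq_sum_range,
      show a + 1 + 1 - 1 = a + 1 by omega]
    refine Finset.sum_congr rfl fun i _ => ?_
    rw [show 1 + i + (b+1) - 2 = i + b by omega, show b + 1 - 1 = b by omega,
      show a + 1 - (1 + i) = a - i by omega, fun_blk, app_blk]
  · rw [← Finset.Ico_add_one_right_eq_Icc, Finset.sum_Ico_eq_sum_range,
      show b + 1 + 1 - 1 = b + 1 by omega]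
    refine Finset.sum_congr rfl fun j _ => ?_
    rw [show 1 + j + (a+1) - 2 = j + a by omega, show a + 1 - 1 = a by omega,
      show b + 1 - (1 + j) = b - j by omega, fun_blk, app_blk]
end

section
/- For a, b ≥ 2 and convergent multi-indices a = (a_1,…,a_r), b = (b_1,…,b_s) with a_1, b_1 ≥ 2, the limit as n → ∞ of Σ_{k=1}^{n+1} ζ_{k-1}(b_2,…,b_s) ζ_{2n+1-k}(a)/k^{b_1} + Σ_{k=1}^{n+1} ζ_{k-1}(a_2,…,a_r) ζ_{2n+1-k}(b)/k^{a_1} equals 2 ζ(a) ζ(b). -/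
open Filter Topology

/-- `zetaN N [a₁, …, a_r]` is the finite multiple zeta value
`ζ_N(a₁,…,a_r) = Σ_{N ≥ n₁ > ⋯ > n_r ≥ 1} Π 1/nᵢ^{aᵢ}`; `ζ_N` of the empty index is `1`. -/
def zetaN : ℕ → List ℕ → ℚ
  | _, [] => 1
  | N, a :: as => ∑ n ∈ Finset.Icc 1 N, zetaN (n - 1) as / (n : ℚ) ^ a

lemma harmonic_nonneg' (n : ℕ) : 0 ≤ harmonic n := by
  unfold harmonic; positivity

lemma zetaN_cons (N a : ℕ) (as : List ℕ) :
    zetaN N (a :: as) = ∑ n ∈ Finset.Icc 1 N, zetaN (n - 1) as / (n : ℚ) ^ a := rfl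

lemma zetaN_nonneg (l : List ℕ) : ∀ N, 0 ≤ zetaN N l := by
  induction l with
  | nil => intro N; simp [zetaN]
  | cons a as ih =>
    intro N
    rw [zetaN_cons]
    apply Finset.sum_nonneg
    intro n hn
    apply div_nonneg (ih _)
    positivity

lemma zetaN_mono (l : List ℕ) : Monotone (fun N => zetaN N l) := by
  cases l with
  | nil => simp [zetaN]; exact monotone_const
  | cons a as =>
    intro N M hNM
    simp only [zetaN_cons]
    apply Finset.sum_le_sum_of_subset_of_nonneg
    · exact Finset.Icc_subset_Icc_right hNM
    · intro n _ _
      apply div_nonneg (zetaN_nonneg _ _)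
      positivity

lemma harmonic_mono : Monotone harmonic := by
  intro n m h
  unfold harmonic
  apply Finset.sum_le_sum_of_subset_of_nonneg (Finset.range_subset_range.mpr h)
  intro i _ _; positivity

lemma zetaN_le_harmonic_pow (l : List ℕ) (hl : ∀ x ∈ l, 1 ≤ x) :
    ∀ N, zetaN N l ≤ (harmonic N) ^ l.length := by
  induction l with
  | nil => intro N; simp [zetaN]
  | cons a as ih =>
    intro N
    rw [zetaN_cons]
    have h1 : ∀ n ∈ Finset.Icc 1 N, zetaN (n - 1) as / (n : ℚ) ^ a ≤
        (harmonic N) ^ as.length * (1 / n) := by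
      intro n hn
      simp only [Finset.mem_Icc] at hn
      have hn1 : 1 ≤ n := hn.1
      have hnq : (1 : ℚ) ≤ (n : ℚ) := by exact_mod_cast hn1
      have hna : (n : ℚ) ≤ (n : ℚ) ^ a := le_self_pow₀ (by linarith) (by
        have := hl a (List.mem_cons_self (a := a) (l := as)); omega)
      calc zetaN (n - 1) as / (n : ℚ) ^ a ≤ (harmonic N) ^ as.length / (n : ℚ) := by
            apply div_le_div₀
            · exact pow_nonneg (harmonic_nonneg' _) _
            · exact le_trans (ih (fun x hx => hl x (List.mem_cons_of_mem _ hx)) (n-1))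
                (pow_le_pow_left₀ (harmonic_nonneg' _)
                  (harmonic_mono (Nat.sub_le n 1 |>.trans hn.2)) _)
            · linarith
            · exact hna
        _ = (harmonic N) ^ as.length * (1 / n) := by ring
    calc zetaN N (a :: as) ≤ ∑ n ∈ Finset.Icc 1 N, (harmonic N) ^ as.length * (1/(n:ℚ)) :=
          Finset.sum_le_sum h1
      _ = (harmonic N) ^ as.length * harmonic N := by
          rw [← Finset.mul_sum]
          congr 1
          rw [harmonic, ← Finset.Ico_add_one_right_eq_Icc, Finset.sum_Ico_eq_sum_range]
          simp [one_div, add_comm]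
      _ = (harmonic N) ^ (a :: as).length := by rw [List.length_cons]; ring

lemma harmonic_rpow_bound (t n : ℕ) (hn : 1 ≤ n) :
    ((harmonic n : ℚ) : ℝ) ≤ (2*t+3) * (n:ℝ) ^ ((2*(t:ℝ)+2)⁻¹) := by
  set ε : ℝ := (2*(t:ℝ)+2)⁻¹ with hε
  have hεpos : 0 < ε := by positivity
  have hnpos : (0:ℝ) < n := by exact_mod_cast hn
  have h1 : (1:ℝ) ≤ (n:ℝ) ^ ε :=
    Real.one_le_rpow (by exact_mod_cast hn) hεpos.le
  have hlog : Real.log n = (2*(t:ℝ)+2) * Real.log ((n:ℝ) ^ ε) := by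
    rw [Real.log_rpow hnpos, hε]
    field_simp
  have hlog2 : Real.log ((n:ℝ) ^ ε) ≤ (n:ℝ) ^ ε - 1 :=
    Real.log_le_sub_one_of_pos (by positivity)
  have := harmonic_le_one_add_log n
  have ht : (0:ℝ) ≤ 2*(t:ℝ)+2 := by positivity
  nlinarith [mul_le_mul_of_nonneg_left hlog2 ht]

lemma harmonic_pow_bound (t n : ℕ) (hn : 1 ≤ n) :
    ((harmonic n : ℚ) : ℝ) ^ t ≤ (2*t+3 : ℝ) ^ t * (n:ℝ) ^ ((1:ℝ)/2) := by
  set ε : ℝ := (2*(t:ℝ)+2)⁻¹ with hε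
  have hnpos : (0:ℝ) < n := by exact_mod_cast hn
  have h1 : ((harmonic n : ℚ) : ℝ) ^ t ≤ ((2*t+3) * (n:ℝ) ^ ε) ^ t := by
    apply pow_le_pow_left₀ (by exact_mod_cast harmonic_nonneg' n)
    exact harmonic_rpow_bound t n hn
  refine h1.trans ?_
  rw [mul_pow]
  apply mul_le_mul_of_nonneg_left _ (by positivity)
  rw [← Real.rpow_natCast ((n:ℝ) ^ ε) t, ← Real.rpow_mul hnpos.le]
  apply Real.rpow_le_rpow_of_exponent_le (by exact_mod_cast hn)
  have h2 : (0:ℝ) < 2*(t:ℝ)+2 := by positivity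
  rw [hε, inv_mul_le_iff₀ h2]
  nlinarith


lemma zetaN_bddAbove (a₁ : ℕ) (as : List ℕ) (has : ∀ x ∈ as, 1 ≤ x) (ha₁ : 2 ≤ a₁) :
    ∃ C : ℝ, ∀ N, ((zetaN N (a₁ :: as) : ℚ) : ℝ) ≤ C := by
  set t := as.length with ht
  have hsum : Summable (fun n : ℕ => 1 / (n:ℝ) ^ ((3:ℝ)/2)) :=
    Real.summable_one_div_nat_rpow.mpr (by norm_num)
  refine ⟨(2*t+3:ℝ)^t * ∑' n : ℕ, 1 / (n:ℝ) ^ ((3:ℝ)/2), fun N => ?_⟩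
  have hcast : ((zetaN N (a₁ :: as) : ℚ) : ℝ)
      = ∑ n ∈ Finset.Icc 1 N, ((zetaN (n-1) as : ℚ):ℝ) / (n:ℝ) ^ a₁ := by
    rw [zetaN_cons]; push_cast; rfl
  rw [hcast]
  have step : ∀ n ∈ Finset.Icc 1 N,
      ((zetaN (n-1) as : ℚ):ℝ) / (n:ℝ) ^ a₁ ≤ (2*t+3:ℝ)^t * (1 / (n:ℝ) ^ ((3:ℝ)/2)) := by
    intro n hn
    simp only [Finset.mem_Icc] at hn
    have hn1 : 1 ≤ n := hn.1
    have hnpos : (0:ℝ) < n := by exact_mod_cast hn1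
    have hnum : ((zetaN (n-1) as : ℚ):ℝ) ≤ (2*t+3:ℝ)^t * (n:ℝ) ^ ((1:ℝ)/2) := by
      have h1 : (zetaN (n-1) as) ≤ (harmonic (n-1)) ^ t := zetaN_le_harmonic_pow as has (n-1)
      have hm := harmonic_mono (Nat.sub_le n 1)
      have h2 : ((zetaN (n-1) as:ℚ):ℝ) ≤ ((harmonic n : ℚ):ℝ) ^ t := by
        calc ((zetaN (n-1) as:ℚ):ℝ) ≤ ((harmonic (n-1) ^ t : ℚ):ℝ) := by exact_mod_cast h1
          _ ≤ _ := by
              push_cast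
              exact pow_le_pow_left₀ (by exact_mod_cast harmonic_nonneg' _)
                (by exact_mod_cast hm) t
      have h3 := harmonic_pow_bound t n hn1
      calc ((zetaN (n-1) as:ℚ):ℝ) ≤ ((harmonic n : ℚ):ℝ) ^ t := h2
        _ ≤ (2*(t:ℝ)+3)^t * (n:ℝ) ^ ((1:ℝ)/2) := h3
        _ = (2*t+3:ℝ)^t * (n:ℝ) ^ ((1:ℝ)/2) := by norm_num
    have hden : (n:ℝ) ^ (2:ℕ) ≤ (n:ℝ) ^ a₁ :=
      pow_le_pow_right₀ (by exact_mod_cast hn1) ha₁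
    have key : (n:ℝ) ^ ((1:ℝ)/2) / (n:ℝ) ^ (2:ℕ) = 1 / (n:ℝ) ^ ((3:ℝ)/2) := by
      rw [← Real.rpow_natCast (n:ℝ) 2, ← Real.rpow_sub hnpos,
        show (1:ℝ)/2 - ((2:ℕ):ℝ) = -(3/2) by norm_num, Real.rpow_neg hnpos.le, one_div]
    calc ((zetaN (n-1) as : ℚ):ℝ) / (n:ℝ) ^ a₁
        ≤ ((2*t+3:ℝ)^t * (n:ℝ)^((1:ℝ)/2)) / (n:ℝ) ^ (2:ℕ) :=
          div_le_div₀ (by positivity) hnum (by positivity) hden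
      _ = (2*t+3:ℝ)^t * (1/(n:ℝ)^((3:ℝ)/2)) := by rw [mul_div_assoc, key]
  calc ∑ n ∈ Finset.Icc 1 N, ((zetaN (n-1) as : ℚ):ℝ) / (n:ℝ) ^ a₁
      ≤ ∑ n ∈ Finset.Icc 1 N, (2*t+3:ℝ)^t * (1/(n:ℝ)^((3:ℝ)/2)) := Finset.sum_le_sum step
    _ = (2*t+3:ℝ)^t * ∑ n ∈ Finset.Icc 1 N, 1/(n:ℝ)^((3:ℝ)/2) := by rw [Finset.mul_sum]
    _ ≤ _ := by
        apply mul_le_mul_of_nonneg_left _ (by positivity)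
        exact Summable.sum_le_tsum _ (fun i _ => by positivity) hsum

lemma zetaN_tendsto (a₁ : ℕ) (as : List ℕ) (has : ∀ x ∈ as, 1 ≤ x) (ha₁ : 2 ≤ a₁) :
    ∃ z : ℝ, Tendsto (fun N : ℕ => ((zetaN N (a₁ :: as) : ℚ) : ℝ)) atTop (𝓝 z) ∧
      ∀ N, ((zetaN N (a₁ :: as) : ℚ) : ℝ) ≤ z := by
  obtain ⟨C, hC⟩ := zetaN_bddAbove a₁ as has ha₁
  have hmono : Monotone (fun N : ℕ => ((zetaN N (a₁ :: as) : ℚ) : ℝ)) :=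
    fun N M h => Rat.cast_le.mpr (zetaN_mono (a₁ :: as) h)
  have hbdd : BddAbove (Set.range fun N : ℕ => ((zetaN N (a₁::as):ℚ):ℝ)) :=
    ⟨C, by rintro x ⟨N, rfl⟩; exact hC N⟩
  exact ⟨_, tendsto_atTop_ciSup hmono hbdd, fun N => le_ciSup hbdd N⟩

lemma sum_tendsto_mul (a₁ b₁ : ℕ) (as bs : List ℕ) (za zb : ℝ)
    (hza : Tendsto (fun N : ℕ => ((zetaN N (a₁ :: as) : ℚ) : ℝ)) atTop (𝓝 za))
    (hzale : ∀ N, ((zetaN N (a₁ :: as) : ℚ) : ℝ) ≤ za)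
    (hzb : Tendsto (fun N : ℕ => ((zetaN N (b₁ :: bs) : ℚ) : ℝ)) atTop (𝓝 zb)) :
    Tendsto (fun n : ℕ => ∑ k ∈ Finset.Icc 1 (n+1),
      ((zetaN (k-1) bs : ℚ):ℝ) * ((zetaN (2*n+1-k) (a₁::as) : ℚ):ℝ) / (k:ℝ)^b₁)
      atTop (𝓝 (za * zb)) := by
  have hfb : ∀ n : ℕ, ((zetaN n (b₁::bs) : ℚ):ℝ)
      = ∑ k ∈ Finset.Icc 1 n, ((zetaN (k-1) bs:ℚ):ℝ)/(k:ℝ)^b₁ := by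
    intro n; rw [zetaN_cons]; push_cast; rfl
  have hlow : ∀ n : ℕ, ((zetaN n (a₁::as):ℚ):ℝ) * ((zetaN (n+1) (b₁::bs):ℚ):ℝ)
      ≤ ∑ k ∈ Finset.Icc 1 (n+1),
        ((zetaN (k-1) bs : ℚ):ℝ) * ((zetaN (2*n+1-k) (a₁::as) : ℚ):ℝ) / (k:ℝ)^b₁ := by
    intro n
    rw [hfb, Finset.mul_sum]
    apply Finset.sum_le_sum
    intro k hk
    simp only [Finset.mem_Icc] at hk
    have h1 : ((zetaN n (a₁::as):ℚ):ℝ) ≤ ((zetaN (2*n+1-k) (a₁::as):ℚ):ℝ) :=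
      Rat.cast_le.mpr (zetaN_mono (a₁::as) (by omega))
    have h2 : (0:ℝ) ≤ ((zetaN (k-1) bs:ℚ):ℝ) := by exact_mod_cast zetaN_nonneg bs (k-1)
    have h3 : (0:ℝ) < (k:ℝ)^b₁ := by
      have : (0:ℝ) < (k:ℝ) := by exact_mod_cast hk.1
      positivity
    calc ((zetaN n (a₁::as):ℚ):ℝ) * (((zetaN (k-1) bs:ℚ):ℝ)/(k:ℝ)^b₁)
        = ((zetaN (k-1) bs:ℚ):ℝ) * ((zetaN n (a₁::as):ℚ):ℝ) / (k:ℝ)^b₁ := by ring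
      _ ≤ _ := by gcongr
  have hup : ∀ n : ℕ, (∑ k ∈ Finset.Icc 1 (n+1),
        ((zetaN (k-1) bs : ℚ):ℝ) * ((zetaN (2*n+1-k) (a₁::as) : ℚ):ℝ) / (k:ℝ)^b₁)
      ≤ za * ((zetaN (n+1) (b₁::bs):ℚ):ℝ) := by
    intro n
    rw [hfb, Finset.mul_sum]
    apply Finset.sum_le_sum
    intro k hk
    simp only [Finset.mem_Icc] at hk
    have h1 : ((zetaN (2*n+1-k) (a₁::as):ℚ):ℝ) ≤ za := hzale _
    have h2 : (0:ℝ) ≤ ((zetaN (k-1) bs:ℚ):ℝ) := by exact_mod_cast zetaN_nonneg bs (k-1)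
    have h3 : (0:ℝ) < (k:ℝ)^b₁ := by
      have : (0:ℝ) < (k:ℝ) := by exact_mod_cast hk.1
      positivity
    calc ((zetaN (k-1) bs : ℚ):ℝ) * ((zetaN (2*n+1-k) (a₁::as) : ℚ):ℝ) / (k:ℝ)^b₁
        ≤ ((zetaN (k-1) bs : ℚ):ℝ) * za / (k:ℝ)^b₁ := by gcongr
      _ = za * (((zetaN (k-1) bs:ℚ):ℝ)/(k:ℝ)^b₁) := by ring
  have hshift : Tendsto (fun n : ℕ => ((zetaN (n+1) (b₁::bs):ℚ):ℝ)) atTop (𝓝 zb) :=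
    hzb.comp (tendsto_add_atTop_nat 1)
  exact tendsto_of_tendsto_of_tendsto_of_le_of_le (hza.mul hshift)
    (tendsto_const_nhds.mul hshift) hlow hup

/-- Corollary 2: for `N = 2n+1`, `j = n+1` and convergent indices (`a₁, b₁ ≥ 2`),
the symmetric sums converge to `2 ζ(a) ζ(b)`, where `ζ(a) = lim_N ζ_N(a)`. -/
theorem reciprocity_limit (a₁ b₁ : ℕ) (as bs : List ℕ)
    (ha : ∀ x ∈ a₁ :: as, 1 ≤ x) (hb : ∀ x ∈ b₁ :: bs, 1 ≤ x)
    (ha₁ : 2 ≤ a₁) (hb₁ : 2 ≤ b₁) :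
    ∃ za zb : ℝ,
      Tendsto (fun N : ℕ => ((zetaN N (a₁ :: as) : ℚ) : ℝ)) atTop (𝓝 za) ∧
      Tendsto (fun N : ℕ => ((zetaN N (b₁ :: bs) : ℚ) : ℝ)) atTop (𝓝 zb) ∧
      Tendsto (fun n : ℕ =>
          (((∑ k ∈ Finset.Icc 1 (n + 1),
              zetaN (k - 1) bs * zetaN (2 * n + 1 - k) (a₁ :: as) / (k : ℚ) ^ b₁)
            + ∑ k ∈ Finset.Icc 1 (n + 1),
              zetaN (k - 1) as * zetaN (2 * n + 1 - k) (b₁ :: bs) / (k : ℚ) ^ a₁ : ℚ) : ℝ))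
        atTop (𝓝 (2 * za * zb)) := by
  have ha' : ∀ x ∈ as, 1 ≤ x := fun x hx => ha x (List.mem_cons_of_mem _ hx)
  have hb' : ∀ x ∈ bs, 1 ≤ x := fun x hx => hb x (List.mem_cons_of_mem _ hx)
  obtain ⟨za, hza, hzale⟩ := zetaN_tendsto a₁ as ha' ha₁
  obtain ⟨zb, hzb, hzble⟩ := zetaN_tendsto b₁ bs hb' hb₁
  refine ⟨za, zb, hza, hzb, ?_⟩
  have keyF := sum_tendsto_mul a₁ b₁ as bs za zb hza hzale hzb
  have keyG := sum_tendsto_mul b₁ a₁ bs as zb za hzb hzble hza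
  have h2 : 2 * za * zb = za * zb + zb * za := by ring
  rw [h2]
  refine Tendsto.congr (fun n => ?_) (keyF.add keyG)
  push_cast
  rfl
end
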